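/- For any Q ≥ 2, any fraction γ_i in F_Q, and any integer k ≥ 3, the recurrence ν_k(γ_i) = ν_2(γ_{i+k-2})·ν_{k-1}(γ_i) − ν_{k-2}(γ_i) holds. -/

import Mathlib

/-- The Farey fractions of order `Q`, as a set of rationals in `(0,1]`
with denominator at most `Q` (rationals are automatically in lowest terms). -/
def fareySet (Q : ℕ) : Set ℚ := {x | 0 < x ∧ x ≤ 1 ∧ x.den ≤ Q}

/-- `IsFarey Q N p q` asserts that `i ↦ p i / q i` (for `1 ≤ i ≤ N`) enumerates the
Farey fractions of order `Q` in increasing order, in lowest terms, extended to all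
integer indices by the periodicity `γ_{i+N} = γ_i + 1`. -/
structure IsFarey (Q N : ℕ) (p q : ℤ → ℤ) : Prop where
  qpos : ∀ i : ℤ, 0 < q i
  coprime : ∀ i : ℤ, Int.gcd (p i) (q i) = 1
  mono : ∀ i j : ℤ, i < j → (p i : ℚ) / (q i) < (p j : ℚ) / (q j)
  mem : ∀ i : ℤ, 1 ≤ i → i ≤ (N : ℤ) → ((p i : ℚ) / (q i)) ∈ fareySet Q
  surj : ∀ x ∈ fareySet Q, ∃ i : ℤ, 1 ≤ i ∧ i ≤ (N : ℤ) ∧ (p i : ℚ) / (q i) = x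
  period_p : ∀ i : ℤ, p (i + N) = p i + q i
  period_q : ∀ i : ℤ, q (i + N) = q i

/-- The `k`-index `ν_k(γ_i) = p_{i+k-1} q_{i-1} - p_{i-1} q_{i+k-1}`. -/
def nuk (p q : ℤ → ℤ) (k : ℕ) (i : ℤ) : ℤ :=
  p (i + k - 1) * q (i - 1) - p (i - 1) * q (i + k - 1)

/-!
Consecutive Farey fractions `a/b < c/d` are unimodular, `b c - a d = 1`. Indeed, the solution
`x/y` of `b x - a y = 1` with `Q - b < y ≤ Q` is a Farey fraction above `a/b`, so `c/d ≤ x/y`;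
and a fraction strictly between the unimodular pair `a/b`, `x/y` has denominator at least
`b + y > Q`, so `c/d = x/y`. The wrap-around pair `γ_N = 1/1`, `γ_{N+1} = (Q+1)/Q` is unimodular
by inspection, and periodicity covers all other indices.

Unimodularity of `(γ_{j-1}, γ_j)` and `(γ_j, γ_{j+1})` gives the three-term relation
`ν_2(γ_j) (p_j, q_j) = (p_{j-1} + p_{j+1}, q_{j-1} + q_{j+1})`, and `ν_k(γ_i)` is the determinant
of `(p_{i+k-1}, q_{i+k-1})` and `(p_{i-1}, q_{i-1})`, linear in the first vector.
-/

theorem add_le_den_of_between {a b c d x y : ℤ} (hb : 0 < b) (hy : 0 < y)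
    (hxy : b * x - a * y = 1) (hac : a * d < c * b) (hcx : c * y < x * d) : b + y ≤ d := by
  have hd : d = (d * x - c * y) * b + (b * c - a * d) * y := by linear_combination -d * hxy
  nlinarith

theorem exists_mul_sub_mul_eq_one_of_isCoprime {a b : ℤ} (Q : ℤ) (hb : 0 < b)
    (hab : IsCoprime a b) : ∃ x y : ℤ, b * x - a * y = 1 ∧ Q - b < y ∧ y ≤ Q := by
  obtain ⟨u, v, huv⟩ := hab
  have hdiv := Int.emod_add_mul_ediv (Q + u) b
  have hr := Int.emod_nonneg (Q + u) hb.ne'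
  have hr' := Int.emod_lt_of_pos (Q + u) hb
  refine ⟨v + (Q + u) / b * a, -u + (Q + u) / b * b, by linear_combination huv, ?_, ?_⟩ <;>
    nlinarith

namespace IsFarey

variable {Q N : ℕ} {p q : ℤ → ℤ}

theorem strictMono (hF : IsFarey Q N p q) : StrictMono fun i => (p i : ℚ) / q i := hF.mono

theorem period_pos (hF : IsFarey Q N p q) : 0 < (N : ℤ) := by
  by_contra hN
  have h := hF.period_p 0
  rw [show (N : ℤ) = 0 by omega, add_zero] at h
  linarith [hF.qpos 0]

theorem eq_of_div_eq (hF : IsFarey Q N p q) {i a b : ℤ} (hb : 0 < b) (hab : Int.gcd a b = 1)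
    (h : (p i : ℚ) / q i = a / b) : p i = a ∧ q i = b :=
  Rat.div_int_inj (hF.qpos i) hb (hF.coprime i) hab h

theorem bounds (hF : IsFarey Q N p q) {i : ℤ} (h1 : 1 ≤ i) (h2 : i ≤ N) :
    0 < p i ∧ p i ≤ q i ∧ q i ≤ Q := by
  obtain ⟨hpos, hle, hden⟩ := hF.mem i h1 h2
  have hq : (0 : ℚ) < q i := by exact_mod_cast hF.qpos i
  have hden' := Rat.den_div_eq_of_coprime (hF.qpos i) (hF.coprime i)
  refine ⟨?_, ?_, by omega⟩
  · exact_mod_cast (div_pos_iff_of_pos_right hq).mp hpos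
  · exact_mod_cast (div_le_one hq).mp hle

theorem last (hF : IsFarey Q N p q) : p N = 1 ∧ q N = 1 := by
  have hN := hF.period_pos
  have hQ := (hF.bounds hN le_rfl).2.2
  have hqN := hF.qpos N
  obtain ⟨m, -, hmN, hm⟩ := hF.surj 1 ⟨one_pos, le_rfl, by simp; omega⟩
  have hNm : N ≤ m := hF.strictMono.le_iff_le.mp <| by
    simp only [hm]; exact (hF.mem N hN le_rfl).2.1
  refine hF.eq_of_div_eq one_pos (by simp) ?_
  rw [show m = N by omega] at hm
  simpa using hm

theorem first (hF : IsFarey Q N p q) : p 1 = 1 ∧ q 1 = Q := by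
  have hN := hF.period_pos
  obtain ⟨hp, hpq, hqQ⟩ := hF.bounds le_rfl hN
  have hQ : (0 : ℤ) < Q := by omega
  have hmem : ((1 : ℤ) : ℚ) / ((Q : ℤ) : ℚ) ∈ fareySet Q := by
    have hden := Rat.den_div_eq_of_coprime hQ (by simp : Int.gcd 1 (Q : ℤ) = 1)
    refine ⟨by positivity, ?_, by omega⟩
    rw [div_le_one (by exact_mod_cast hQ)]
    exact_mod_cast hQ
  obtain ⟨m, hm1, -, hm⟩ := hF.surj _ hmem
  have hm1' : m ≤ 1 := hF.strictMono.le_iff_le.mp <| by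
    simp only [hm]
    rw [div_le_div_iff₀ (by exact_mod_cast hQ) (by exact_mod_cast hF.qpos 1)]
    exact_mod_cast (by nlinarith : (1 : ℤ) * q 1 ≤ p 1 * Q)
  rw [show m = 1 by omega] at hm
  exact hF.eq_of_div_eq hQ (by simp) hm

theorem det_succ_of_mem (hF : IsFarey Q N p q) {j : ℤ} (hj1 : 1 ≤ j) (hj2 : j + 1 ≤ N) :
    p (j + 1) * q j - p j * q (j + 1) = 1 := by
  obtain ⟨ha, hab, hbQ⟩ := hF.bounds hj1 (by omega)
  obtain ⟨-, hcd, hdQ⟩ := hF.bounds (by omega : 1 ≤ j + 1) hj2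
  have hb := hF.qpos j
  have hd := hF.qpos (j + 1)
  have hac : p j * q (j + 1) < p (j + 1) * q j := by
    have h := hF.mono j (j + 1) (by omega)
    rw [div_lt_div_iff₀ (by exact_mod_cast hb) (by exact_mod_cast hd)] at h
    exact_mod_cast h
  obtain ⟨x, y, hxy, hyQ, hyQ'⟩ := exists_mul_sub_mul_eq_one_of_isCoprime Q hb
    (Int.isCoprime_iff_gcd_eq_one.mpr (hF.coprime j))
  have hy : 0 < y := by omega
  have hx : 0 < x := by nlinarith
  have hab' : p j < q j := by nlinarith
  have hgxy : Int.gcd x y = 1 := Int.isCoprime_iff_gcd_eq_one.mp ⟨q j, -p j, by linarith⟩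
  have hmem : (x : ℚ) / y ∈ fareySet Q := by
    have hden := Rat.den_div_eq_of_coprime hy hgxy
    refine ⟨by positivity, ?_, by omega⟩
    rw [div_le_one (by exact_mod_cast hy)]
    exact_mod_cast (by nlinarith : x ≤ y)
  obtain ⟨m, -, -, hm⟩ := hF.surj _ hmem
  have hjm : j < m := hF.strictMono.lt_iff_lt.mp <| by
    simp only [hm]
    rw [div_lt_div_iff₀ (by exact_mod_cast hb) (by exact_mod_cast hy)]
    exact_mod_cast (by linarith : p j * y < x * q j)
  have hcx : (p (j + 1) : ℚ) / q (j + 1) ≤ x / y := by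
    rw [← hm]; exact hF.strictMono.le_iff_le.mpr (by omega)
  have hcx_eq : (p (j + 1) : ℚ) / q (j + 1) = x / y := by
    refine hcx.eq_of_not_lt fun hlt => ?_
    rw [div_lt_div_iff₀ (by exact_mod_cast hd) (by exact_mod_cast hy)] at hlt
    have := add_le_den_of_between hb hy hxy hac (by exact_mod_cast hlt)
    omega
  obtain ⟨rfl, rfl⟩ := hF.eq_of_div_eq hy hgxy hcx_eq
  linear_combination hxy

theorem det_succ (hF : IsFarey Q N p q) (j : ℤ) : p (j + 1) * q j - p j * q (j + 1) = 1 := by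
  have hper : Function.Periodic (fun j => p (j + 1) * q j - p j * q (j + 1)) (N : ℤ) := by
    intro j
    simp only [add_right_comm j (N : ℤ) 1, hF.period_p, hF.period_q]
    ring
  obtain ⟨j₀, ⟨hj₁, hj₂⟩, hj⟩ := hper.exists_mem_Ico hF.period_pos j 1
  rw [hj]
  rcases lt_or_eq_of_le (show j₀ ≤ N by omega) with hlt | rfl
  · exact hF.det_succ_of_mem hj₁ (by omega)
  · obtain ⟨hp1, hq1⟩ := hF.first
    obtain ⟨hpN, hqN⟩ := hF.last
    rw [add_comm, hF.period_p, hF.period_q, hp1, hq1, hpN, hqN]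
    ring

end IsFarey

section Unimodular

variable {p q : ℤ → ℤ}

theorem nuk_two_mul_left (hdet : ∀ j, p (j + 1) * q j - p j * q (j + 1) = 1) (j : ℤ) :
    nuk p q 2 j * p j = p (j - 1) + p (j + 1) := by
  have h := hdet (j - 1)
  rw [sub_add_cancel] at h
  rw [nuk, show j + ((2 : ℕ) : ℤ) - 1 = j + 1 by push_cast; ring]
  linear_combination p (j + 1) * h + p (j - 1) * hdet j

theorem nuk_two_mul_right (hdet : ∀ j, p (j + 1) * q j - p j * q (j + 1) = 1) (j : ℤ) :
    nuk p q 2 j * q j = q (j - 1) + q (j + 1) := by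
  have h := hdet (j - 1)
  rw [sub_add_cancel] at h
  rw [nuk, show j + ((2 : ℕ) : ℤ) - 1 = j + 1 by push_cast; ring]
  linear_combination q (j + 1) * h + q (j - 1) * hdet j

theorem nuk_add_two (hdet : ∀ j, p (j + 1) * q j - p j * q (j + 1) = 1) (i : ℤ) (k : ℕ) :
    nuk p q (k + 2) i = nuk p q 2 (i + k) * nuk p q (k + 1) i - nuk p q k i := by
  have hp := nuk_two_mul_left hdet (i + k)
  have hq := nuk_two_mul_right hdet (i + k)
  have e₂ : i + ((k + 2 : ℕ) : ℤ) - 1 = i + k + 1 := by push_cast; ring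
  have e₁ : i + ((k + 1 : ℕ) : ℤ) - 1 = i + k := by push_cast; ring
  generalize nuk p q 2 (i + k) = ν at hp hq ⊢
  simp only [nuk, e₁, e₂]
  linear_combination p (i - 1) * hq - q (i - 1) * hp

end Unimodular

theorem nuk_recurrence_general (Q N : ℕ) (p q : ℤ → ℤ)
    (hF : IsFarey Q N p q) (i : ℤ)
    (k : ℕ) (hk : 3 ≤ k) :
    nuk p q k i = nuk p q 2 (i + k - 2) * nuk p q (k - 1) i - nuk p q (k - 2) i := by
  obtain ⟨n, rfl⟩ : ∃ n, k = n + 2 := ⟨k - 2, by omega⟩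
  rw [show n + 2 - 1 = n + 1 from rfl, Nat.add_sub_cancel,
    show i + ((n + 2 : ℕ) : ℤ) - 2 = i + n by push_cast; ring]
  exact nuk_add_two hF.det_succ i n

/-- For `k ≥ 3`, `ν_k(γ_i) = ν_2(γ_{i+k-2}) ν_{k-1}(γ_i) - ν_{k-2}(γ_i)`. -/
theorem nuk_recurrence (Q N : ℕ) (p q : ℤ → ℤ) (hQ : 2 ≤ Q)
    (hF : IsFarey Q N p q) (i : ℤ) (h1 : 1 ≤ i) (h2 : i ≤ (N : ℤ))
    (k : ℕ) (hk : 3 ≤ k) :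
    nuk p q k i = nuk p q 2 (i + k - 2) * nuk p q (k - 1) i - nuk p q (k - 2) i :=
  nuk_recurrence_general Q N p q hF i k hk
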